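/- arXiv:1907.07059 — 4 statements merged into one kernel-verified Lean document; each statement's English description precedes it below -/
import Mathlib

section
/- Let (X,F,μ) and (Y,G,ν) be probability spaces and let c, (cₙ) be F⊗G-measurable real-valued functions on X×Y, each satisfying the integrable bounds condition, such that cₙ is increasing in n and cₙ ↑ c pointwise. Then β*(c) = limₙ β*(cₙ), where β*(h) = inf{μ(f)+ν(g): f∈L¹(μ), g∈L¹(ν), f(x)+g(y) ≥ h(x,y) for all (x,y)}. -/
open MeasureTheory Filter Topology

noncomputable section

variable {X Y : Type*}

/-- `P` is a coupling of `μ` and `ν`: a probability measure on the product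
σ-field with marginals `μ` and `ν`. -/
def IsCoupling [MeasurableSpace X] [MeasurableSpace Y]
    (μ : Measure X) (ν : Measure Y) (P : Measure (X × Y)) : Prop :=
  IsProbabilityMeasure P ∧ P.map Prod.fst = μ ∧ P.map Prod.snd = ν

/-- Values `∫ c dP` as `P` ranges over the couplings of `μ` and `ν`. -/
def primalSet [MeasurableSpace X] [MeasurableSpace Y]
    (μ : Measure X) (ν : Measure Y) (c : X × Y → ℝ) : Set ℝ :=
  {r | ∃ P : Measure (X × Y), IsCoupling μ ν P ∧ r = ∫ z, c z ∂P}

/-- `α(c) = inf_{P ∈ Γ(μ,ν)} ∫ c dP`. -/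
def alphaInf [MeasurableSpace X] [MeasurableSpace Y]
    (μ : Measure X) (ν : Measure Y) (c : X × Y → ℝ) : ℝ :=
  sInf (primalSet μ ν c)

/-- `α*(c) = sup_{P ∈ Γ(μ,ν)} ∫ c dP`. -/
def alphaSup [MeasurableSpace X] [MeasurableSpace Y]
    (μ : Measure X) (ν : Measure Y) (c : X × Y → ℝ) : ℝ :=
  sSup (primalSet μ ν c)

/-- Values `μ(f) + ν(g)` with `f ∈ L¹(μ)`, `g ∈ L¹(ν)` and `f + g ≤ c` pointwise. -/
def dualLowerSet [MeasurableSpace X] [MeasurableSpace Y]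
    (μ : Measure X) (ν : Measure Y) (c : X × Y → ℝ) : Set ℝ :=
  {r | ∃ (f : X → ℝ) (g : Y → ℝ), Integrable f μ ∧ Integrable g ν ∧
    (∀ x y, f x + g y ≤ c (x, y)) ∧ r = ∫ x, f x ∂μ + ∫ y, g y ∂ν}

/-- Values `μ(f) + ν(g)` with `f ∈ L¹(μ)`, `g ∈ L¹(ν)` and `f + g ≥ c` pointwise. -/
def dualUpperSet [MeasurableSpace X] [MeasurableSpace Y]
    (μ : Measure X) (ν : Measure Y) (c : X × Y → ℝ) : Set ℝ :=
  {r | ∃ (f : X → ℝ) (g : Y → ℝ), Integrable f μ ∧ Integrable g ν ∧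
    (∀ x y, c (x, y) ≤ f x + g y) ∧ r = ∫ x, f x ∂μ + ∫ y, g y ∂ν}

/-- `β(c) = sup {μ(f)+ν(g) : f + g ≤ c}`. -/
def betaSup [MeasurableSpace X] [MeasurableSpace Y]
    (μ : Measure X) (ν : Measure Y) (c : X × Y → ℝ) : ℝ :=
  sSup (dualLowerSet μ ν c)

/-- `β*(c) = inf {μ(f)+ν(g) : f + g ≥ c}`. -/
def betaInf [MeasurableSpace X] [MeasurableSpace Y]
    (μ : Measure X) (ν : Measure Y) (c : X × Y → ℝ) : ℝ :=
  sInf (dualUpperSet μ ν c)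

/-- Condition (1.1): `f₁ + g₁ ≤ c ≤ f₂ + g₂` with `f₁, f₂ ∈ L¹(μ)`, `g₁, g₂ ∈ L¹(ν)`. -/
def HasIntegrableBounds [MeasurableSpace X] [MeasurableSpace Y]
    (μ : Measure X) (ν : Measure Y) (c : X × Y → ℝ) : Prop :=
  ∃ (f₁ f₂ : X → ℝ) (g₁ g₂ : Y → ℝ), Integrable f₁ μ ∧ Integrable f₂ μ ∧
    Integrable g₁ ν ∧ Integrable g₂ ν ∧
    ∀ x y, f₁ x + g₁ y ≤ c (x, y) ∧ c (x, y) ≤ f₂ x + g₂ y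

/-- Real-valued indicator of a set. -/
def indR (H : Set (X × Y)) : X × Y → ℝ := H.indicator fun _ => (1 : ℝ)

/-- `R` is a finite union of measurable rectangles, i.e. an element of the ring
generated by the measurable rectangles. -/
def IsRectUnion [MeasurableSpace X] [MeasurableSpace Y] (R : Set (X × Y)) : Prop :=
  ∃ (n : ℕ) (A : Fin n → Set X) (B : Fin n → Set Y),
    (∀ i, MeasurableSet (A i)) ∧ (∀ i, MeasurableSet (B i)) ∧ R = ⋃ i, A i ×ˢ B i

/-!
`β*(cₙ) ≤ β*(c)` is monotonicity of `β*`; the content is `β*(c) ≤ L := sup β*(cₙ)`. Fix `ε > 0`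
and an integrable upper bound `A₂ ⊕ B₂ ≥ c`. Normalizing and clamping nearly optimal dual pairs of
`cₙ` gives pairs `(u, v)` with `cₙ ≤ u ⊕ v`, `μ u + ν v ≤ L + ε` and `|u - A₂|, |v - B₂| ≤ T`,
for one `T` independent of `n`. These pairs form a decreasing sequence of convex sets. Along a
subsequence, near-minimizers of the `L²`-distance to `(A₂, B₂)` are Cauchy in `L²` by the
parallelogram law, hence converge a.e.; the band `T` provides the domination, and the limit is a
dual pair for `c` of value at most `L + ε`.
-/

open Set

section Integrals

variable {α : Type*} [MeasurableSpace α] {m : Measure α}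

lemma add_integral_le_add_integral [IsProbabilityMeasure m] {f g : α → ℝ}
    (hf : Integrable f m) (hg : Integrable g m) {a b : ℝ} (h : ∀ y, a + f y ≤ b + g y) :
    a + ∫ y, f y ∂m ≤ b + ∫ y, g y ∂m := by
  have : ∫ y, (a + f y) ∂m ≤ ∫ y, (b + g y) ∂m :=
    integral_mono ((integrable_const a).add hf) ((integrable_const b).add hg) h
  rwa [integral_add (integrable_const _) hf, integral_add (integrable_const _) hg,
    integral_const, integral_const, probReal_univ, one_smul, one_smul] at this

lemma integral_sub_sq_eq {a b : α → ℝ} (ha : MemLp a 2 m) (hb : MemLp b 2 m) :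
    ∫ x, (a x - b x) ^ 2 ∂m =
      2 * ∫ x, a x ^ 2 ∂m + 2 * ∫ x, b x ^ 2 ∂m - 4 * ∫ x, ((a x + b x) / 2) ^ 2 ∂m := by
  have hmid : Integrable (fun x => ((a x + b x) / 2) ^ 2) m :=
    ((ha.add hb).const_mul 2⁻¹).integrable_sq.congr
      (ae_of_all _ fun x => by simp only [Pi.add_apply]; ring)
  have ha2 := ha.integrable_sq.const_mul 2
  have hb2 := hb.integrable_sq.const_mul 2
  have hab2 : Integrable (fun x => 2 * a x ^ 2 + 2 * b x ^ 2) m := ha2.add hb2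
  calc ∫ x, (a x - b x) ^ 2 ∂m
      = ∫ x, (2 * a x ^ 2 + 2 * b x ^ 2 - 4 * ((a x + b x) / 2) ^ 2) ∂m :=
        integral_congr_ae (ae_of_all _ fun x => by ring)
    _ = _ := by
        rw [integral_sub hab2 (hmid.const_mul 4), integral_add ha2 hb2,
          integral_const_mul, integral_const_mul, integral_const_mul]

lemma integral_sq_le_of_abs_le [IsProbabilityMeasure m] {f : α → ℝ} {T : ℝ}
    (h : ∀ x, |f x| ≤ T) : ∫ x, f x ^ 2 ∂m ≤ T ^ 2 := by
  have := norm_integral_le_of_norm_le_const (μ := m) (f := fun x => f x ^ 2) (C := T ^ 2)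
    (ae_of_all _ fun x => by
      rw [Real.norm_eq_abs, abs_pow]
      exact pow_le_pow_left₀ (abs_nonneg _) (h x) 2)
  rw [probReal_univ, mul_one] at this
  exact (le_abs_self _).trans this

lemma integrable_sq_of_abs_le [IsFiniteMeasure m] {f : α → ℝ} {T : ℝ}
    (hf : AEStronglyMeasurable f m) (h : ∀ x, |f x| ≤ T) : Integrable (fun x => f x ^ 2) m :=
  (MemLp.of_bound (p := 2) hf T (ae_of_all _ h)).integrable_sq

lemma integral_abs_le_of_integral_sq_le [IsProbabilityMeasure m] {f : α → ℝ} {s : ℝ}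
    (hf : Integrable f m) (hf2 : Integrable (fun x => f x ^ 2) m) (hs : 0 < s)
    (h : ∫ x, f x ^ 2 ∂m ≤ s ^ 2) : ∫ x, |f x| ∂m ≤ s := by
  have hpt : ∀ x, |f x| ≤ f x ^ 2 / (2 * s) + s / 2 := fun x => by
    rw [div_add_div _ _ (by positivity) two_ne_zero, le_div_iff₀ (by positivity), ← sq_abs]
    nlinarith [sq_nonneg (|f x| - s)]
  calc ∫ x, |f x| ∂m ≤ ∫ x, (f x ^ 2 / (2 * s) + s / 2) ∂m :=
        integral_mono hf.abs ((hf2.div_const _).add (integrable_const _)) hpt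
    _ = (∫ x, f x ^ 2 ∂m) / (2 * s) + s / 2 := by
        rw [integral_add (hf2.div_const _) (integrable_const _), integral_div, integral_const,
          probReal_univ, one_smul]
    _ ≤ s ^ 2 / (2 * s) + s / 2 := by gcongr
    _ = s := by field_simp; ring

lemma tendsto_integral_max_sub_atTop {W : α → ℝ} (hW : Integrable W m) :
    Tendsto (fun T : ℝ => ∫ x, max (W x - T) 0 ∂m) atTop (𝓝 0) := by
  have := tendsto_integral_filter_of_dominated_convergence (μ := m) (l := atTop)
    (F := fun (T : ℝ) x => max (W x - T) 0) (f := fun _ => 0) (fun x => |W x|)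
    (Eventually.of_forall fun T =>
      (hW.aestronglyMeasurable.sub aestronglyMeasurable_const).sup aestronglyMeasurable_const)
    ((eventually_ge_atTop 0).mono fun T hT => ae_of_all _ fun x => by
      rw [Real.norm_eq_abs, abs_of_nonneg (le_max_right _ _)]
      exact max_le (by linarith [le_abs_self (W x)]) (abs_nonneg _))
    hW.abs
    (ae_of_all _ fun x => tendsto_const_nhds.congr' <|
      (eventually_ge_atTop (W x)).mono fun T hT => by simp [hT])
  simpa using this

end Integrals

section Clamp

variable {α β : Type*}

def clampAround (A : α → ℝ) (T : ℝ) (f : α → ℝ) (x : α) : ℝ :=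
  max (min (f x) (A x + T)) (A x - T)

lemma abs_clampAround_sub_le {A f : α → ℝ} {T : ℝ} (hT : 0 ≤ T) (x : α) :
    |clampAround A T f x - A x| ≤ T := by
  unfold clampAround
  grind

lemma le_clampAround_add_clampAround {A f : α → ℝ} {B g : β → ℝ} {T r : ℝ} (hT : 0 ≤ T)
    {x : α} {y : β} (hfg : r ≤ f x + g y) (hAB : r ≤ A x + B y) :
    r ≤ clampAround A T f x + clampAround B T g y := by
  unfold clampAround
  grind

variable [MeasurableSpace α] {m : Measure α} [IsFiniteMeasure m]

lemma MeasureTheory.Integrable.clampAround {A f : α → ℝ} (hA : Integrable A m)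
    (hf : Integrable f m) (T : ℝ) : Integrable (clampAround A T f) m :=
  (hf.inf (hA.add (integrable_const T))).sup (hA.sub (integrable_const T))

lemma integral_clampAround_le {A f l : α → ℝ} (hA : Integrable A m) (hf : Integrable f m)
    (hl : Integrable l m) (hlf : ∀ x, l x ≤ f x) (T : ℝ) :
    ∫ x, clampAround A T f x ∂m ≤ ∫ x, f x ∂m + ∫ x, max (A x - l x - T) 0 ∂m := by
  have htail : Integrable (fun x => max (A x - l x - T) 0) m :=
    ((hA.sub hl).sub (integrable_const T)).sup (integrable_const 0)
  rw [← integral_add hf htail]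
  refine integral_mono (hA.clampAround hf T) (hf.add htail) fun x => ?_
  unfold clampAround
  grind

end Clamp

section Limits

variable {α : Type*} [MeasurableSpace α] {m : Measure α} [IsProbabilityMeasure m]

lemma ae_exists_tendsto_of_integral_sq_sub_le {u : ℕ → α → ℝ} (hu : ∀ j, Integrable (u j) m)
    (hsq : ∀ j k, Integrable (fun x => (u j x - u k x) ^ 2) m)
    (h : ∀ j k, j ≤ k → ∫ x, (u j x - u k x) ^ 2 ∂m ≤ ((2⁻¹ : ℝ) ^ j) ^ 2) :
    ∀ᵐ x ∂m, ∃ l, Tendsto (fun j => u j x) atTop (𝓝 l) := by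
  have hL1 : ∀ j k, j ≤ k → eLpNorm (u j - u k) 1 m ≤ ENNReal.ofReal ((2⁻¹ : ℝ) ^ j) := by
    intro j k hjk
    rw [eLpNorm_one_eq_lintegral_enorm,
      ← ofReal_integral_norm_eq_lintegral_enorm ((hu j).sub (hu k))]
    simp only [Pi.sub_apply, Real.norm_eq_abs]
    exact ENNReal.ofReal_le_ofReal <| integral_abs_le_of_integral_sq_le ((hu j).sub (hu k))
      (hsq j k) (by positivity) (h j k hjk)
  refine Lp.ae_tendsto_of_cauchy_eLpNorm (fun j => (hu j).aestronglyMeasurable) le_rfl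
    (B := fun N => ENNReal.ofReal (2 * (2⁻¹ : ℝ) ^ N)) ?_ fun N j k hj hk => ?_
  · rw [← ENNReal.ofReal_tsum_of_nonneg (fun N => by positivity)
      ((summable_geometric_of_lt_one (by norm_num) (by norm_num)).mul_left 2)]
    exact ENNReal.ofReal_ne_top
  wlog hjk : j ≤ k generalizing j k
  · rw [← eLpNorm_neg, neg_sub]
    exact this k j hk hj (le_of_not_ge hjk)
  calc eLpNorm (u j - u k) 1 m ≤ ENNReal.ofReal ((2⁻¹ : ℝ) ^ j) := hL1 j k hjk
    _ ≤ ENNReal.ofReal ((2⁻¹ : ℝ) ^ N) :=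
        ENNReal.ofReal_le_ofReal (pow_le_pow_of_le_one (by norm_num) (by norm_num) hj)
    _ < ENNReal.ofReal (2 * (2⁻¹ : ℝ) ^ N) :=
        (ENNReal.ofReal_lt_ofReal_iff (by positivity)).2
          (by linarith [pow_pos (by norm_num : (0 : ℝ) < 2⁻¹) N])

lemma exists_limit_of_integral_sq_sub_le {u : ℕ → α → ℝ} {A : α → ℝ} {T : ℝ} (hT : 0 ≤ T)
    (hA : Integrable A m) (hu : ∀ j, Integrable (u j) m) (hbd : ∀ j x, |u j x - A x| ≤ T)
    (h : ∀ j k, j ≤ k → ∫ x, (u j x - u k x) ^ 2 ∂m ≤ ((2⁻¹ : ℝ) ^ j) ^ 2) :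
    ∃ v : α → ℝ, Integrable v m ∧ (∀ x, |v x - A x| ≤ T) ∧
      (∀ x, v x = A x + T ∨ Tendsto (fun j => u j x) atTop (𝓝 (v x))) ∧
      Tendsto (fun j => ∫ x, u j x ∂m) atTop (𝓝 (∫ x, v x ∂m)) := by
  classical
  have hsq : ∀ j k, Integrable (fun x => (u j x - u k x) ^ 2) m := fun j k =>
    integrable_sq_of_abs_le ((hu j).sub (hu k)).aestronglyMeasurable (T := 2 * T) fun x => by
      have := abs_sub_le (u j x) (A x) (u k x)
      rw [abs_sub_comm (A x)] at this
      linarith [hbd j x, hbd k x]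
  set v : α → ℝ := fun x =>
    if hx : ∃ l, Tendsto (fun j => u j x) atTop (𝓝 l) then hx.choose else A x + T
  have hv : ∀ x, v x = A x + T ∨ Tendsto (fun j => u j x) atTop (𝓝 (v x)) := fun x => by
    by_cases hx : ∃ l, Tendsto (fun j => u j x) atTop (𝓝 l)
    · exact Or.inr (by simpa only [v, dif_pos hx] using hx.choose_spec)
    · exact Or.inl (by simp only [v, dif_neg hx])
  have hv_bd : ∀ x, |v x - A x| ≤ T := fun x => by
    rcases hv x with hx | hx
    · rw [hx, add_sub_cancel_left, abs_of_nonneg hT]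
    · exact le_of_tendsto' ((hx.sub_const (A x)).abs) fun j => hbd j x
  have hv_ae : ∀ᵐ x ∂m, Tendsto (fun j => u j x) atTop (𝓝 (v x)) := by
    filter_upwards [ae_exists_tendsto_of_integral_sq_sub_le hu hsq h] with x hx
    simpa only [v, dif_pos hx] using hx.choose_spec
  have hdom : ∀ (w : α → ℝ), (∀ x, |w x - A x| ≤ T) → ∀ᵐ x ∂m, ‖w x‖ ≤ |A x| + T :=
    fun w hw => ae_of_all _ fun x => by
      rw [Real.norm_eq_abs]
      linarith [abs_sub_abs_le_abs_sub (w x) (A x), hw x]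
  have hbound := hA.abs.add (integrable_const T)
  refine ⟨v, hbound.mono' (aestronglyMeasurable_of_tendsto_ae atTop
      (fun j => (hu j).aestronglyMeasurable) hv_ae) (hdom v hv_bd), hv_bd, hv, ?_⟩
  exact tendsto_integral_of_dominated_convergence _ (fun j => (hu j).aestronglyMeasurable)
    hbound (fun j => hdom (u j) (hbd j)) hv_ae

end Limits

/-- For a squared Hilbert norm `Q` the midpoint defect is `‖w j - w k‖²`, so this is the
nearest-point argument: the infima `δ N` of `Q` on `C N` increase to a finite limit, `w j` nearly
attains `δ (N j)` with `δ (N j)` near the limit, and for `j ≤ k` the midpoint of `w j, w k` lies in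
`C (N j)`, so its value is at least `δ (N j)`. -/
theorem exists_seq_mem_midpoint_defect_le {E : Type*} [AddCommGroup E] [Module ℝ E]
    {C : ℕ → Set E} (hC : Antitone C) (hconv : ∀ N, Convex ℝ (C N))
    (hne : ∀ N, (C N).Nonempty) {Q : E → ℝ} (hbelow : BddBelow (Q '' C 0))
    (habove : BddAbove (Q '' C 0)) {ε : ℕ → ℝ} (hε : ∀ j, 0 < ε j) (hε_anti : Antitone ε) :
    ∃ (N : ℕ → ℕ) (w : ℕ → E), StrictMono N ∧ (∀ j, w j ∈ C (N j)) ∧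
      ∀ j k, j ≤ k → 2 * Q (w j) + 2 * Q (w k) - 4 * Q (midpoint ℝ (w j) (w k)) ≤ ε j := by
  set δ : ℕ → ℝ := fun N => sInf (Q '' C N)
  have hbddN : ∀ N, BddBelow (Q '' C N) := fun N =>
    hbelow.mono (image_mono (hC (Nat.zero_le N)))
  have hδ_mono : Monotone δ := fun M N hMN =>
    csInf_le_csInf (hbddN M) ((hne N).image Q) (image_mono (hC hMN))
  obtain ⟨b, hb⟩ := habove
  have hδ_bdd : BddAbove (range δ) := ⟨b, forall_mem_range.2 fun N => by
    obtain ⟨w, hw⟩ := hne N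
    exact (csInf_le (hbddN N) (mem_image_of_mem Q hw)).trans
      (hb (mem_image_of_mem Q (hC (Nat.zero_le N) hw)))⟩
  obtain ⟨N, hN_mono, hN⟩ : ∃ N : ℕ → ℕ, StrictMono N ∧ ∀ j, (⨆ n, δ n) - ε j / 8 < δ (N j) :=
    extraction_forall_of_eventually fun j =>
      (tendsto_order.1 (tendsto_atTop_ciSup hδ_mono hδ_bdd)).1 _ (by linarith [hε j])
  have hw : ∀ j, ∃ w ∈ C (N j), Q w < δ (N j) + ε j / 8 := fun j => by
    obtain ⟨_, ⟨w, hw, rfl⟩, hlt⟩ := exists_lt_of_csInf_lt ((hne (N j)).image Q)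
      (lt_add_of_pos_right _ (by linarith [hε j] : 0 < ε j / 8))
    exact ⟨w, hw, hlt⟩
  choose w hwC hwQ using hw
  refine ⟨N, w, hN_mono, hwC, fun j k hjk => ?_⟩
  have hmid : midpoint ℝ (w j) (w k) ∈ C (N j) :=
    (hconv (N j)).midpoint_mem (hwC j) (hC (hN_mono.monotone hjk) (hwC k))
  have hδ_mid : δ (N j) ≤ Q (midpoint ℝ (w j) (w k)) :=
    csInf_le (hbddN _) (mem_image_of_mem Q hmid)
  linarith [hwQ j, hwQ k, hN j, hε_anti hjk, le_ciSup hδ_bdd (N j), le_ciSup hδ_bdd (N k)]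

section Dual

variable [MeasurableSpace X] [MeasurableSpace Y] {μ : Measure X} {ν : Measure Y}

lemma dualUpperSet_nonempty {h : X × Y → ℝ} {f : X → ℝ} {g : Y → ℝ} (hf : Integrable f μ)
    (hg : Integrable g ν) (hfg : ∀ x y, h (x, y) ≤ f x + g y) :
    (dualUpperSet μ ν h).Nonempty :=
  ⟨_, f, g, hf, hg, hfg, rfl⟩

lemma betaInf_mono {h h' : X × Y → ℝ} (hh : ∀ z, h z ≤ h' z)
    (hbdd : BddBelow (dualUpperSet μ ν h)) (hne : (dualUpperSet μ ν h').Nonempty) :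
    betaInf μ ν h ≤ betaInf μ ν h' :=
  csInf_le_csInf hbdd hne <| by
    rintro _ ⟨f, g, hf, hg, hfg, rfl⟩
    exact ⟨f, g, hf, hg, fun x y => (hh (x, y)).trans (hfg x y), rfl⟩

variable (μ ν) in
structure IsBoundedDualPair (h : X × Y → ℝ) (A : X → ℝ) (B : Y → ℝ) (T M : ℝ)
    (w : (X → ℝ) × (Y → ℝ)) : Prop where
  integrable_fst : Integrable w.1 μ
  integrable_snd : Integrable w.2 ν
  abs_fst_sub_le : ∀ x, |w.1 x - A x| ≤ T
  abs_snd_sub_le : ∀ y, |w.2 y - B y| ≤ T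
  le_add : ∀ x y, h (x, y) ≤ w.1 x + w.2 y
  integral_add_le : ∫ x, w.1 x ∂μ + ∫ y, w.2 y ∂ν ≤ M

variable (μ ν) in
def pairSqDist (A : X → ℝ) (B : Y → ℝ) (w : (X → ℝ) × (Y → ℝ)) : ℝ :=
  ∫ x, (w.1 x - A x) ^ 2 ∂μ + ∫ y, (w.2 y - B y) ^ 2 ∂ν

lemma pairSqDist_nonneg {A : X → ℝ} {B : Y → ℝ} (w : (X → ℝ) × (Y → ℝ)) :
    0 ≤ pairSqDist μ ν A B w :=
  add_nonneg (integral_nonneg fun _ => sq_nonneg _) (integral_nonneg fun _ => sq_nonneg _)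

lemma convex_setOf_isBoundedDualPair {h : X × Y → ℝ} {A : X → ℝ} {B : Y → ℝ} {T M : ℝ} :
    Convex ℝ {w | IsBoundedDualPair μ ν h A B T M w} := by
  intro w hw w' hw' a b ha hb hab
  have hband : ∀ {r r' s : ℝ}, |r - s| ≤ T → |r' - s| ≤ T → |a * r + b * r' - s| ≤ T :=
    fun {r r' s} hr hr' => by
      have := convex_closedBall s T
        (by rwa [Metric.mem_closedBall, Real.dist_eq] : r ∈ Metric.closedBall s T)
        (by rwa [Metric.mem_closedBall, Real.dist_eq] : r' ∈ Metric.closedBall s T) ha hb hab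
      rwa [Metric.mem_closedBall, Real.dist_eq, smul_eq_mul, smul_eq_mul] at this
  refine ⟨(hw.integrable_fst.smul a).add (hw'.integrable_fst.smul b),
    (hw.integrable_snd.smul a).add (hw'.integrable_snd.smul b),
    fun x => hband (hw.abs_fst_sub_le x) (hw'.abs_fst_sub_le x),
    fun y => hband (hw.abs_snd_sub_le y) (hw'.abs_snd_sub_le y), fun x y => ?_, ?_⟩
  · calc h (x, y) = a * h (x, y) + b * h (x, y) := by linear_combination (-h (x, y)) * hab
      _ ≤ a * (w.1 x + w.2 y) + b * (w'.1 x + w'.2 y) := by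
          gcongr
          exacts [hw.le_add x y, hw'.le_add x y]
      _ = (a • w + b • w').1 x + (a • w + b • w').2 y := by
          simp only [Prod.fst_add, Prod.snd_add, Prod.smul_fst, Prod.smul_snd, Pi.add_apply,
            Pi.smul_apply, smul_eq_mul]
          ring
  · have e₁ : ∫ x, (a • w + b • w').1 x ∂μ = a * ∫ x, w.1 x ∂μ + b * ∫ x, w'.1 x ∂μ := by
      simp only [Prod.fst_add, Prod.smul_fst, Pi.add_apply, Pi.smul_apply, smul_eq_mul]
      rw [integral_add (hw.integrable_fst.const_mul a) (hw'.integrable_fst.const_mul b),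
        integral_const_mul, integral_const_mul]
    have e₂ : ∫ y, (a • w + b • w').2 y ∂ν = a * ∫ y, w.2 y ∂ν + b * ∫ y, w'.2 y ∂ν := by
      simp only [Prod.snd_add, Prod.smul_snd, Pi.add_apply, Pi.smul_apply, smul_eq_mul]
      rw [integral_add (hw.integrable_snd.const_mul a) (hw'.integrable_snd.const_mul b),
        integral_const_mul, integral_const_mul]
    have hM : a * M + b * M = M := by rw [← add_mul, hab, one_mul]
    rw [e₁, e₂]
    linarith [mul_le_mul_of_nonneg_left hw.integral_add_le ha,
      mul_le_mul_of_nonneg_left hw'.integral_add_le hb]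

namespace IsBoundedDualPair

variable {h h' : X × Y → ℝ} {A : X → ℝ} {B : Y → ℝ} {T M : ℝ} {w w' : (X → ℝ) × (Y → ℝ)}

lemma mono (hh : ∀ z, h z ≤ h' z) (hw : IsBoundedDualPair μ ν h' A B T M w) :
    IsBoundedDualPair μ ν h A B T M w :=
  { hw with le_add := fun x y => (hh (x, y)).trans (hw.le_add x y) }

lemma betaInf_le (hw : IsBoundedDualPair μ ν h A B T M w) (hbdd : BddBelow (dualUpperSet μ ν h)) :
    betaInf μ ν h ≤ M :=
  (csInf_le hbdd ⟨w.1, w.2, hw.integrable_fst, hw.integrable_snd, hw.le_add, rfl⟩).trans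
    hw.integral_add_le

lemma midpoint_defect_eq [IsFiniteMeasure μ] [IsFiniteMeasure ν]
    {T' M' : ℝ} (hA : AEStronglyMeasurable A μ) (hB : AEStronglyMeasurable B ν)
    (hw : IsBoundedDualPair μ ν h A B T M w) (hw' : IsBoundedDualPair μ ν h' A B T' M' w') :
    2 * pairSqDist μ ν A B w + 2 * pairSqDist μ ν A B w' -
        4 * pairSqDist μ ν A B (midpoint ℝ w w') =
      ∫ x, (w.1 x - w'.1 x) ^ 2 ∂μ + ∫ y, (w.2 y - w'.2 y) ^ 2 ∂ν := by
  have hfst := integral_sub_sq_eq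
    (.of_bound (hw.integrable_fst.1.sub hA) T (ae_of_all _ hw.abs_fst_sub_le))
    (.of_bound (hw'.integrable_fst.1.sub hA) T' (ae_of_all _ hw'.abs_fst_sub_le))
  have hsnd := integral_sub_sq_eq
    (.of_bound (hw.integrable_snd.1.sub hB) T (ae_of_all _ hw.abs_snd_sub_le))
    (.of_bound (hw'.integrable_snd.1.sub hB) T' (ae_of_all _ hw'.abs_snd_sub_le))
  simp only [Pi.sub_apply, sub_sub_sub_cancel_right] at hfst hsnd
  have hmid₁ : ∀ x, (midpoint ℝ w w').1 x - A x = (w.1 x - A x + (w'.1 x - A x)) / 2 := fun x => by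
    simp only [midpoint_eq_smul_add, Prod.smul_fst, Prod.fst_add, Pi.smul_apply, Pi.add_apply,
      smul_eq_mul, invOf_eq_inv]
    ring
  have hmid₂ : ∀ y, (midpoint ℝ w w').2 y - B y = (w.2 y - B y + (w'.2 y - B y)) / 2 := fun y => by
    simp only [midpoint_eq_smul_add, Prod.smul_snd, Prod.snd_add, Pi.smul_apply, Pi.add_apply,
      smul_eq_mul, invOf_eq_inv]
    ring
  simp only [pairSqDist, hmid₁, hmid₂, hfst, hsnd]
  ring

lemma pairSqDist_le [IsProbabilityMeasure μ] [IsProbabilityMeasure ν]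
    (hw : IsBoundedDualPair μ ν h A B T M w) : pairSqDist μ ν A B w ≤ 2 * T ^ 2 := by
  rw [pairSqDist]
  linarith [integral_sq_le_of_abs_le (m := μ) hw.abs_fst_sub_le,
    integral_sq_le_of_abs_le (m := ν) hw.abs_snd_sub_le]

end IsBoundedDualPair

variable [IsProbabilityMeasure μ] [IsProbabilityMeasure ν]

lemma integral_add_integral_le_of_forall_le {f₁ f₂ : X → ℝ} {g₁ g₂ : Y → ℝ}
    (hf₁ : Integrable f₁ μ) (hf₂ : Integrable f₂ μ) (hg₁ : Integrable g₁ ν)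
    (hg₂ : Integrable g₂ ν) (h : ∀ x y, f₁ x + g₁ y ≤ f₂ x + g₂ y) :
    ∫ x, f₁ x ∂μ + ∫ y, g₁ y ∂ν ≤ ∫ x, f₂ x ∂μ + ∫ y, g₂ y ∂ν := by
  have hx : ∀ x, ∫ y, g₁ y ∂ν + f₁ x ≤ ∫ y, g₂ y ∂ν + f₂ x := fun x => by
    linarith [add_integral_le_add_integral hg₁ hg₂ (h x)]
  linarith [add_integral_le_add_integral hf₁ hf₂ hx]

lemma bddBelow_dualUpperSet {h : X × Y → ℝ} {A : X → ℝ} {B : Y → ℝ} (hA : Integrable A μ)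
    (hB : Integrable B ν) (hlow : ∀ x y, A x + B y ≤ h (x, y)) : BddBelow (dualUpperSet μ ν h) := by
  refine ⟨∫ x, A x ∂μ + ∫ y, B y ∂ν, ?_⟩
  rintro _ ⟨f, g, hf, hg, hfg, rfl⟩
  exact integral_add_integral_le_of_forall_le hA hf hB hg fun x y => (hlow x y).trans (hfg x y)

/-- After moving the constant `∫ g` from `g` to `f`, the lower bound `A₁ + B₁ ≤ h` bounds `f` and
`g` from below uniformly in `h`, so clamping them to the band of width `T` around `(A₂, B₂)` costs
at most the tail integrals of `A₂ - A₁` and `B₂ - B₁` above level `T`. -/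
theorem exists_isBoundedDualPair {A₁ A₂ : X → ℝ} {B₁ B₂ : Y → ℝ} (hA₁ : Integrable A₁ μ)
    (hA₂ : Integrable A₂ μ) (hB₁ : Integrable B₁ ν) (hB₂ : Integrable B₂ ν) (M : ℝ) {ε : ℝ}
    (hε : 0 < ε) :
    ∃ T, 0 ≤ T ∧ ∀ h : X × Y → ℝ, (∀ x y, A₁ x + B₁ y ≤ h (x, y)) →
      (∀ x y, h (x, y) ≤ A₂ x + B₂ y) → betaInf μ ν h < M →
      ∃ w, IsBoundedDualPair μ ν h A₂ B₂ T (M + ε) w := by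
  set l₁ : X → ℝ := fun x => A₁ x + ∫ y, B₁ y ∂ν
  set l₂ : Y → ℝ := fun y => B₁ y + (∫ x, A₁ x ∂μ - M)
  have hl₁ : Integrable l₁ μ := hA₁.add (integrable_const _)
  have hl₂ : Integrable l₂ ν := hB₁.add (integrable_const _)
  obtain ⟨T, ⟨hT₁, hT₂⟩, hT⟩ :=
    ((((tendsto_integral_max_sub_atTop (hA₂.sub hl₁)).eventually (ge_mem_nhds (half_pos hε))).and
      ((tendsto_integral_max_sub_atTop (hB₂.sub hl₂)).eventually (ge_mem_nhds (half_pos hε)))).and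
        (eventually_ge_atTop 0)).exists
  simp only [Pi.sub_apply] at hT₁ hT₂
  refine ⟨T, hT, fun h hlow hupp hβ => ?_⟩
  obtain ⟨_, ⟨f, g, hf, hg, hfg, rfl⟩, hlt⟩ :=
    exists_lt_of_csInf_lt (dualUpperSet_nonempty hA₂ hB₂ hupp) hβ
  set F : X → ℝ := fun x => f x + ∫ y, g y ∂ν
  set G : Y → ℝ := fun y => g y - ∫ y, g y ∂ν
  have hF : Integrable F μ := hf.add (integrable_const _)
  have hG : Integrable G ν := hg.sub (integrable_const _)
  have hFG : ∀ x y, h (x, y) ≤ F x + G y := fun x y => by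
    simp only [F, G]
    linarith [hfg x y]
  have hF_int : ∫ x, F x ∂μ = ∫ x, f x ∂μ + ∫ y, g y ∂ν := by
    simp only [F, integral_add hf (integrable_const _), integral_const, probReal_univ, one_smul]
  have hG_int : ∫ y, G y ∂ν = 0 := by
    simp only [G, integral_sub hg (integrable_const _), integral_const, probReal_univ, one_smul,
      sub_self]
  have hFl : ∀ x, l₁ x ≤ F x := fun x => by
    have := add_integral_le_add_integral hB₁ hG fun y => (hlow x y).trans (hFG x y)
    rwa [hG_int, add_zero] at this
  have hGl : ∀ y, l₂ y ≤ G y := fun y => by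
    have := add_integral_le_add_integral hA₁ hF fun x =>
      (add_comm _ _).trans_le ((hlow x y).trans ((hFG x y).trans_eq (add_comm _ _)))
    simp only [l₂]
    linarith
  refine ⟨(clampAround A₂ T F, clampAround B₂ T G), hA₂.clampAround hF T, hB₂.clampAround hG T,
    abs_clampAround_sub_le hT, abs_clampAround_sub_le hT,
    fun x y => le_clampAround_add_clampAround hT (hFG x y) (hupp x y), ?_⟩
  linarith [integral_clampAround_le hA₂ hF hl₁ hFl T, integral_clampAround_le hB₂ hG hl₂ hGl T]

theorem exists_isBoundedDualPair_of_tendsto {c : ℕ → X × Y → ℝ} {clim : X × Y → ℝ}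
    {A : X → ℝ} {B : Y → ℝ} {T M : ℝ} (hA : Integrable A μ) (hB : Integrable B ν) (hT : 0 ≤ T)
    (hupp : ∀ x y, clim (x, y) ≤ A x + B y) (hmono : Monotone c)
    (hconv : ∀ z, Tendsto (fun n => c n z) atTop (𝓝 (clim z))) {N : ℕ → ℕ} (hN : StrictMono N)
    {w : ℕ → (X → ℝ) × (Y → ℝ)} (hw : ∀ j, IsBoundedDualPair μ ν (c (N j)) A B T M (w j))
    (hcauchy : ∀ j k, j ≤ k → ∫ x, ((w j).1 x - (w k).1 x) ^ 2 ∂μ +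
      ∫ y, ((w j).2 y - (w k).2 y) ^ 2 ∂ν ≤ ((2⁻¹ : ℝ) ^ j) ^ 2) :
    ∃ w, IsBoundedDualPair μ ν clim A B T M w := by
  obtain ⟨u, hu, hu_bd, hu_lim, hu_int⟩ := exists_limit_of_integral_sq_sub_le hT hA
    (fun j => (hw j).integrable_fst) (fun j => (hw j).abs_fst_sub_le) fun j k hjk =>
      (le_add_of_nonneg_right (integral_nonneg fun _ => sq_nonneg _)).trans (hcauchy j k hjk)
  obtain ⟨v, hv, hv_bd, hv_lim, hv_int⟩ := exists_limit_of_integral_sq_sub_le hT hB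
    (fun j => (hw j).integrable_snd) (fun j => (hw j).abs_snd_sub_le) fun j k hjk =>
      (le_add_of_nonneg_left (integral_nonneg fun _ => sq_nonneg _)).trans (hcauchy j k hjk)
  refine ⟨(u, v), hu, hv, hu_bd, hv_bd, fun x y => ?_,
    le_of_tendsto' (hu_int.add hv_int) fun j => (hw j).integral_add_le⟩
  rcases hu_lim x with hx | hx
  · linarith [hupp x y, (abs_le.1 (hv_bd y)).1]
  rcases hv_lim y with hy | hy
  · linarith [hupp x y, (abs_le.1 (hu_bd x)).1]
  refine le_of_tendsto' (hconv (x, y)) fun n => ge_of_tendsto (hx.add hy) ?_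
  filter_upwards [eventually_ge_atTop n] with j hj
  exact (hmono (hj.trans (hN.id_le j)) (x, y)).trans ((hw j).le_add x y)

theorem betaInf_le_of_tendsto {c : ℕ → X × Y → ℝ} {clim : X × Y → ℝ} {A₁ A₂ : X → ℝ}
    {B₁ B₂ : Y → ℝ} (hA₁ : Integrable A₁ μ) (hA₂ : Integrable A₂ μ) (hB₁ : Integrable B₁ ν)
    (hB₂ : Integrable B₂ ν) (hlow : ∀ x y, A₁ x + B₁ y ≤ c 0 (x, y))
    (hupp : ∀ x y, clim (x, y) ≤ A₂ x + B₂ y) (hmono : Monotone c)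
    (hconv : ∀ z, Tendsto (fun n => c n z) atTop (𝓝 (clim z))) {L : ℝ}
    (hL : ∀ n, betaInf μ ν (c n) ≤ L) : betaInf μ ν clim ≤ L := by
  have hle : ∀ n z, c n z ≤ clim z := fun n z =>
    Monotone.ge_of_tendsto (fun _ _ hmn => hmono hmn z) (hconv z) n
  have hlow' : ∀ n x y, A₁ x + B₁ y ≤ c n (x, y) := fun n x y =>
    (hlow x y).trans (hmono n.zero_le _)
  refine le_of_forall_pos_le_add fun ε hε => ?_
  obtain ⟨T, hT, hpair⟩ := exists_isBoundedDualPair hA₁ hA₂ hB₁ hB₂ (L + ε / 2) (half_pos hε)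
  set C : ℕ → Set ((X → ℝ) × (Y → ℝ)) := fun n =>
    {w | IsBoundedDualPair μ ν (c n) A₂ B₂ T (L + ε / 2 + ε / 2) w}
  obtain ⟨N, w, hN, hwC, hdefect⟩ := exists_seq_mem_midpoint_defect_le (C := C)
    (fun _ _ hmn _ hw => hw.mono fun z => hmono hmn z) (fun _ => convex_setOf_isBoundedDualPair)
    (fun n => hpair (c n) (hlow' n) (fun x y => (hle n _).trans (hupp x y))
      (by linarith [hL n]))
    (Q := pairSqDist μ ν A₂ B₂) ⟨0, forall_mem_image.2 fun w _ => pairSqDist_nonneg w⟩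
    ⟨2 * T ^ 2, forall_mem_image.2 fun _ hw => hw.pairSqDist_le⟩
    (ε := fun j => ((2⁻¹ : ℝ) ^ j) ^ 2) (fun j => by positivity)
    (fun i j hij => pow_le_pow_left₀ (by positivity)
      (pow_le_pow_of_le_one (by norm_num) (by norm_num) hij) 2)
  obtain ⟨w', hw'⟩ := exists_isBoundedDualPair_of_tendsto hA₂ hB₂ hT hupp hmono hconv hN hwC
    fun j k hjk => (hwC j).midpoint_defect_eq hA₂.aestronglyMeasurable
      hB₂.aestronglyMeasurable (hwC k) ▸ hdefect j k hjk
  have := hw'.betaInf_le (bddBelow_dualUpperSet hA₁ hB₁ fun x y =>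
    (hlow' 0 x y).trans (hle 0 _))
  linarith

end Dual

theorem stmt2_general [MeasurableSpace X] [MeasurableSpace Y]
    (μ : Measure X) (ν : Measure Y) [IsProbabilityMeasure μ] [IsProbabilityMeasure ν]
    (c : ℕ → X × Y → ℝ) (clim : X × Y → ℝ)
    (hb : ∀ n, HasIntegrableBounds μ ν (c n)) (hblim : HasIntegrableBounds μ ν clim)
    (hmono : ∀ n z, c n z ≤ c (n + 1) z)
    (hconv : ∀ z, Tendsto (fun n => c n z) atTop (𝓝 (clim z))) :
    Tendsto (fun n => betaInf μ ν (c n)) atTop (𝓝 (betaInf μ ν clim)) := by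
  obtain ⟨A₁, _, B₁, _, hA₁, -, hB₁, -, hb₀⟩ := hb 0
  obtain ⟨_, A₂, _, B₂, -, hA₂, -, hB₂, hblim⟩ := hblim
  have hc : Monotone c := monotone_nat_of_le_succ fun n z => hmono n z
  have hle : ∀ n z, c n z ≤ clim z := fun n z =>
    Monotone.ge_of_tendsto (fun _ _ hmn => hc hmn z) (hconv z) n
  have hbdd : ∀ n, BddBelow (dualUpperSet μ ν (c n)) := fun n =>
    bddBelow_dualUpperSet hA₁ hB₁ fun x y => (hb₀ x y).1.trans (hc n.zero_le _)
  have hne : ∀ h : X × Y → ℝ, (∀ z, h z ≤ clim z) → (dualUpperSet μ ν h).Nonempty :=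
    fun h hh => dualUpperSet_nonempty hA₂ hB₂ fun x y => (hh (x, y)).trans (hblim x y).2
  refine tendsto_atTop_isLUB
    (fun m n hmn => betaInf_mono (fun z => hc hmn z) (hbdd m) (hne _ (hle n)))
    ⟨forall_mem_range.2 fun n => betaInf_mono (hle n) (hbdd n) (hne _ fun _ => le_rfl),
      fun L hL => ?_⟩
  exact betaInf_le_of_tendsto hA₁ hA₂ hB₁ hB₂ (fun x y => (hb₀ x y).1)
    (fun x y => (hblim x y).2) hc hconv fun n => hL (mem_range_self n)

theorem stmt2 [MeasurableSpace X] [MeasurableSpace Y]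
    (μ : Measure X) (ν : Measure Y) [IsProbabilityMeasure μ] [IsProbabilityMeasure ν]
    (c : ℕ → X × Y → ℝ) (clim : X × Y → ℝ)
    (hmeas : ∀ n, Measurable (c n)) (hmeaslim : Measurable clim)
    (hb : ∀ n, HasIntegrableBounds μ ν (c n)) (hblim : HasIntegrableBounds μ ν clim)
    (hmono : ∀ n z, c n z ≤ c (n + 1) z)
    (hconv : ∀ z, Tendsto (fun n => c n z) atTop (𝓝 (clim z))) :
    Tendsto (fun n => betaInf μ ν (c n)) atTop (𝓝 (betaInf μ ν clim)) :=
  stmt2_general μ ν c clim hb hblim hmono hconv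
end
end

section
/- Let (X,F,μ) and (Y,G,ν) be probability spaces and R ⊆ X×Y a finite union of measurable rectangles (R in the ring generated by {A×B : A∈F, B∈G}). Then α(1_R) = β(1_R) and α*(1_R) = β*(1_R): duality holds for indicators of elements of the rectangle ring. -/
open MeasureTheory Filter Topology

noncomputable section

variable {X Y : Type*}

open Finset ProbabilityTheory
open scoped ENNReal

/-!
Refine the rectangles `Aᵢ × Bᵢ` into the atoms `φ⁻¹{s} × ψ⁻¹{t}`, where `φ x = (x ∈ Aᵢ)ᵢ` and
`ψ y = (y ∈ Bᵢ)ᵢ`, so that `R` is the union of the blocks over a set `T` of index pairs. On the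
finite index sets, max-flow min-cut for the network with supplies `μ(φ⁻¹{s})`, demands
`ν(ψ⁻¹{t})` and edges `T` gives a transport plan whose mass on `T` is at least `μ(U) + ν(V)` for
a cover `T ⊆ U × univ ∪ univ × V`. Spreading each entry of the plan over its block as a product
of conditioned marginals turns it into a coupling `P` with `P(R) ≥ μ(U) + ν(V)`, while
`1_U + 1_V ≥ 1_R` is dual feasible; with weak duality this gives `α*(1_R) = β*(1_R)`. Applied to
`Rᶜ`, also a union of blocks, the same argument gives `α(1_R) = β(1_R)`.
-/

lemma sum_lineMap_of_sum_eq {I J : Type*} [Fintype I] [DecidableEq J] {σ τ : I → J → ℝ}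
    {j : J} {δ : ℝ} (hcol : ∑ a, τ a = ∑ a, σ a + Pi.single j δ) (t : ℝ) :
    ∑ a, ((1 - t) • σ + t • τ) a = ∑ a, σ a + Pi.single j (t * δ) := by
  simp only [Pi.add_apply, Pi.smul_apply, sum_add_distrib, ← smul_sum, hcol]
  ext b
  simp only [Pi.add_apply, Pi.smul_apply, Pi.single_apply, smul_eq_mul]
  split_ifs <;> ring

section Flow

variable {I J : Type*} [Fintype J]

structure IsRowFlow (p : I → ℝ) (T : Finset (I × J)) (σ : I → J → ℝ) : Prop where
  nonneg : ∀ i j, 0 ≤ σ i j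
  eq_zero_of_notMem : ∀ i j, (i, j) ∉ T → σ i j = 0
  sum_le : ∀ i, ∑ j, σ i j ≤ p i

namespace IsRowFlow

variable {p : I → ℝ} {T : Finset (I × J)} {σ τ : I → J → ℝ}

lemma mem_of_pos (hσ : IsRowFlow p T σ) {i j} (h : 0 < σ i j) : (i, j) ∈ T := by
  by_contra hT
  exact h.ne' (hσ.eq_zero_of_notMem i j hT)

lemma lineMap (hσ : IsRowFlow p T σ) (hτ : IsRowFlow p T τ) {t : ℝ} (ht₀ : 0 ≤ t)
    (ht₁ : t ≤ 1) : IsRowFlow p T ((1 - t) • σ + t • τ) where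
  nonneg i j := by
    simp only [Pi.add_apply, Pi.smul_apply, smul_eq_mul]
    have := hσ.nonneg i j; have := hτ.nonneg i j
    nlinarith
  eq_zero_of_notMem i j h := by
    simp [hσ.eq_zero_of_notMem i j h, hτ.eq_zero_of_notMem i j h]
  sum_le i := by
    simp only [Pi.add_apply, Pi.smul_apply, smul_eq_mul, sum_add_distrib, ← mul_sum]
    have := hσ.sum_le i; have := hτ.sum_le i
    nlinarith

end IsRowFlow

variable [Fintype I]

lemma isCompact_setOf_isRowFlow (p : I → ℝ) (q : J → ℝ) (T : Finset (I × J)) :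
    IsCompact {σ : I → J → ℝ | IsRowFlow p T σ ∧ ∀ j, ∑ i, σ i j ≤ q j} := by
  have hset : {σ : I → J → ℝ | IsRowFlow p T σ ∧ ∀ j, ∑ i, σ i j ≤ q j} =
      {σ | (∀ i j, 0 ≤ σ i j) ∧ (∀ i j, (i, j) ∉ T → σ i j = 0) ∧ (∀ i, ∑ j, σ i j ≤ p i) ∧
        ∀ j, ∑ i, σ i j ≤ q j} := by
    ext σ
    exact ⟨fun ⟨⟨h₀, h₁, h₂⟩, h₃⟩ => ⟨h₀, h₁, h₂, h₃⟩, fun ⟨h₀, h₁, h₂, h₃⟩ => ⟨⟨h₀, h₁, h₂⟩, h₃⟩⟩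
  have hclosed : IsClosed {σ : I → J → ℝ | IsRowFlow p T σ ∧ ∀ j, ∑ i, σ i j ≤ q j} := by
    rw [hset]
    simp only [Set.ofPred_and, Set.ofPred_forall]
    refine .inter ?_ (.inter ?_ (.inter ?_ ?_)) <;>
      refine isClosed_iInter fun _ => ?_
    · exact isClosed_iInter fun _ => isClosed_le continuous_const (by fun_prop)
    · exact isClosed_iInter fun _ => isClosed_iInter fun _ =>
        isClosed_eq (by fun_prop) continuous_const
    · exact isClosed_le (by fun_prop) continuous_const
    · exact isClosed_le (by fun_prop) continuous_const
  refine (isCompact_Icc (a := 0) (b := fun i _ => p i)).of_isClosed_subset hclosed ?_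
  rintro σ ⟨hσ, -⟩
  exact ⟨fun i j => hσ.nonneg i j,
    fun i j => (single_le_sum (fun j _ => hσ.nonneg i j) (mem_univ j)).trans (hσ.sum_le i)⟩

/-- Vertices of the residual graph of the flow `σ` that can be reached from a row with
spare capacity. -/
inductive Reachable (p : I → ℝ) (T : Finset (I × J)) (σ : I → J → ℝ) : I ⊕ J → Prop
  | source {i : I} : ∑ j, σ i j < p i → Reachable p T σ (.inl i)
  | forward {i : I} {j : J} : Reachable p T σ (.inl i) → (i, j) ∈ T → Reachable p T σ (.inr j)
  | backward {i : I} {j : J} : Reachable p T σ (.inr j) → 0 < σ i j → Reachable p T σ (.inl i)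

section Augment

variable [DecidableEq I] [DecidableEq J]

def CanAugment (p : I → ℝ) (T : Finset (I × J)) (σ : I → J → ℝ) : I ⊕ J → Prop
  | .inl i => ∃ δ > 0, ∃ τ, IsRowFlow p T τ ∧ ∑ j, τ i j + δ ≤ p i ∧ ∑ a, τ a = ∑ a, σ a
  | .inr j => ∃ δ > 0, ∃ τ, IsRowFlow p T τ ∧ ∑ a, τ a = ∑ a, σ a + Pi.single j δ

variable {p : I → ℝ} {T : Finset (I × J)} {σ : I → J → ℝ}

lemma CanAugment.forward {i : I} {j : J} (h : CanAugment p T σ (.inl i)) (hij : (i, j) ∈ T) :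
    CanAugment p T σ (.inr j) := by
  obtain ⟨δ, hδ, τ, hτ, hrow, hcol⟩ := h
  refine ⟨δ, hδ, τ + Pi.single i (Pi.single j δ), ⟨fun a b => ?_, fun a b hab => ?_, fun a => ?_⟩,
    by simp [sum_add_distrib, hcol]⟩
  · have := hτ.nonneg a b
    rcases eq_or_ne a i with rfl | ha
    · rcases eq_or_ne b j with rfl | hb
      · simpa using add_nonneg this hδ.le
      · simpa [hb]
    · simpa [ha]
  · have : (a, b) ≠ (i, j) := fun h => hab (h ▸ hij)
    rcases eq_or_ne a i with rfl | ha
    · simp_all [hτ.eq_zero_of_notMem a b hab]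
    · simp [ha, hτ.eq_zero_of_notMem a b hab]
  · rcases eq_or_ne a i with rfl | ha
    · simpa [sum_add_distrib] using hrow
    · simpa [sum_add_distrib, ha] using hτ.sum_le a

/-- The flow along the reversed edge `(i, j)` can only be cancelled after mixing `τ` with `σ`,
which keeps the entry at `(i, j)` positive. -/
lemma CanAugment.backward (hσ : IsRowFlow p T σ) {i : I} {j : J}
    (h : CanAugment p T σ (.inr j)) (hij : 0 < σ i j) : CanAugment p T σ (.inl i) := by
  obtain ⟨δ, hδ, τ, hτ, hcol⟩ := h
  set t := σ i j / (δ + σ i j)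
  set η := t * δ
  have ht₀ : 0 ≤ t := by positivity
  have ht₁ : t ≤ 1 := div_le_one_of_le₀ (by linarith) (by positivity)
  have hη : 0 < η := by positivity
  have hη' : η = (1 - t) * σ i j := by
    simp only [η, t]; field_simp; ring
  set ρ := (1 - t) • σ + t • τ
  have hρ : IsRowFlow p T ρ := hσ.lineMap hτ ht₀ ht₁
  have hρij : η ≤ ρ i j := by
    have := hτ.nonneg i j
    simp only [ρ, Pi.add_apply, Pi.smul_apply, smul_eq_mul]
    nlinarith
  have hT : (i, j) ∈ T := hσ.mem_of_pos hij
  refine ⟨η, hη, ρ - Pi.single i (Pi.single j η),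
    ⟨fun a b => ?_, fun a b hab => ?_, fun a => ?_⟩, ?_, ?_⟩
  · have := hρ.nonneg a b
    rcases eq_or_ne a i with rfl | ha
    · rcases eq_or_ne b j with rfl | hb
      · simpa using hρij
      · simpa [hb]
    · simpa [ha]
  · have : (a, b) ≠ (i, j) := fun h => hab (h ▸ hT)
    rcases eq_or_ne a i with rfl | ha
    · simp_all [hρ.eq_zero_of_notMem a b hab]
    · simp [ha, hρ.eq_zero_of_notMem a b hab]
  · rcases eq_or_ne a i with rfl | ha
    · simpa [sum_sub_distrib] using (sub_le_self _ hη.le).trans (hρ.sum_le a)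
    · simpa [sum_sub_distrib, ha] using hρ.sum_le a
  · simpa [sum_sub_distrib] using hρ.sum_le i
  · have hρcol : ∑ a, ρ a = ∑ a, σ a + Pi.single j η := sum_lineMap_of_sum_eq hcol t
    simp [sum_sub_distrib, hρcol]

lemma Reachable.canAugment (hσ : IsRowFlow p T σ) {v : I ⊕ J} (h : Reachable p T σ v) :
    CanAugment p T σ v := by
  induction h with
  | source h => exact ⟨_, sub_pos.2 h, σ, hσ, by linarith, rfl⟩
  | forward _ hij ih => exact ih.forward hij
  | backward _ hij ih => exact ih.backward hσ hij

lemma sum_eq_of_reachable_inr {q : J → ℝ} (hσ : IsRowFlow p T σ) (hσq : ∀ j, ∑ i, σ i j ≤ q j)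
    (hmax : ∀ τ, IsRowFlow p T τ → (∀ j, ∑ i, τ i j ≤ q j) →
      ∑ i, ∑ j, τ i j ≤ ∑ i, ∑ j, σ i j)
    {j : J} (hj : Reachable p T σ (.inr j)) : ∑ i, σ i j = q j := by
  by_contra hne
  have hgap : 0 < q j - ∑ i, σ i j := sub_pos.2 ((hσq j).lt_of_ne hne)
  obtain ⟨δ, hδ, τ, hτ, hcol⟩ := hj.canAugment hσ
  set t := min 1 ((q j - ∑ i, σ i j) / δ)
  have ht₀ : 0 < t := lt_min one_pos (div_pos hgap hδ)
  have htδ : t * δ ≤ q j - ∑ i, σ i j :=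
    (le_div_iff₀ hδ).1 (min_le_right _ _)
  set ρ := (1 - t) • σ + t • τ
  have hρcol b : ∑ a, ρ a b = ∑ a, σ a b + (Pi.single j (t * δ) : J → ℝ) b := by
    have := congrFun (sum_lineMap_of_sum_eq hcol t) b
    rwa [Pi.add_apply, Finset.sum_apply, Finset.sum_apply] at this
  have hρq : ∀ b, ∑ a, ρ a b ≤ q b := by
    intro b
    rw [hρcol]
    rcases eq_or_ne b j with rfl | hb
    · simp only [Pi.single_eq_same]; linarith
    · simpa [hb] using hσq b
  have hle := hmax ρ (hσ.lineMap hτ ht₀.le (min_le_left _ _)) hρq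
  rw [sum_comm, sum_comm (f := fun i j => σ i j)] at hle
  simp only [hρcol, sum_add_distrib, Pi.single_apply, sum_ite_eq', mem_univ, if_true] at hle
  linarith [mul_pos ht₀ hδ]

end Augment

/-- Max-flow min-cut for the bipartite network with row capacities `p`, column capacities `q`
and uncapacitated edges `T`. -/
theorem exists_isRowFlow_cover (p : I → ℝ) (q : J → ℝ) (hp : ∀ i, 0 ≤ p i) (hq : ∀ j, 0 ≤ q j)
    (T : Finset (I × J)) :
    ∃ σ, IsRowFlow p T σ ∧ (∀ j, ∑ i, σ i j ≤ q j) ∧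
      ∃ (I' : Finset I) (J' : Finset J), (∀ x ∈ T, x.1 ∈ I' ∨ x.2 ∈ J') ∧
        ∑ i ∈ I', p i + ∑ j ∈ J', q j ≤ ∑ i, ∑ j, σ i j := by
  classical
  have hzero : IsRowFlow p T (0 : I → J → ℝ) :=
    ⟨fun _ _ => le_rfl, fun _ _ _ => rfl, fun i => by simpa using hp i⟩
  obtain ⟨σ, ⟨hσ, hσq⟩, hmax⟩ := (isCompact_setOf_isRowFlow p q T).exists_isMaxOn
    ⟨0, hzero, fun j => by simpa using hq j⟩ (f := fun σ => ∑ i, ∑ j, σ i j) (by fun_prop)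
  have hsat := fun j => sum_eq_of_reachable_inr (j := j) hσ hσq fun τ hτ hτq => hmax ⟨hτ, hτq⟩
  set I' := univ.filter fun i => ¬ Reachable p T σ (.inl i)
  set J' := univ.filter fun j => Reachable p T σ (.inr j)
  refine ⟨σ, hσ, hσq, I', J', fun x hx => ?_, ?_⟩
  · by_cases hi : Reachable p T σ (.inl x.1)
    · exact .inr (by simpa [J'] using hi.forward hx)
    · exact .inl (by simpa [I'] using hi)
  have hrow : ∀ i ∈ I', p i = ∑ j, σ i j := fun i hi =>
    le_antisymm (not_lt.1 fun h => (mem_filter.1 hi).2 (.source h)) (hσ.sum_le i)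
  have hcut : ∀ i ∈ I', ∀ j ∈ J', σ i j = 0 := fun i hi j hj =>
    le_antisymm (not_lt.1 fun h => (mem_filter.1 hi).2 ((mem_filter.1 hj).2.backward h))
      (hσ.nonneg i j)
  calc ∑ i ∈ I', p i + ∑ j ∈ J', q j
      = ∑ x ∈ I' ×ˢ univ, σ x.1 x.2 + ∑ x ∈ univ ×ˢ J', σ x.1 x.2 := by
        rw [sum_product, sum_product_right, sum_congr rfl hrow,
          sum_congr rfl fun j hj => (hsat j (mem_filter.1 hj).2).symm]
    _ = ∑ x ∈ I' ×ˢ univ ∪ univ ×ˢ J', σ x.1 x.2 := by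
        rw [← sum_union_inter, add_eq_left]
        exact sum_eq_zero fun x hx => by
          simp only [mem_inter, mem_product] at hx
          exact hcut _ hx.1.1 _ hx.2.2
    _ ≤ ∑ x : I × J, σ x.1 x.2 :=
        sum_le_sum_of_subset_of_nonneg (subset_univ _) fun x _ _ => hσ.nonneg x.1 x.2
    _ = ∑ i, ∑ j, σ i j := Fintype.sum_prod_type _

/-- The unused row and column capacities are distributed proportionally. -/
lemma exists_transport_ge {p : I → ℝ} {q : J → ℝ} {σ : I → J → ℝ} (hσp : ∀ i, ∑ j, σ i j ≤ p i)
    (hσq : ∀ j, ∑ i, σ i j ≤ q j) (hpq : ∑ i, p i = ∑ j, q j) :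
    ∃ π : I → J → ℝ, (∀ i j, σ i j ≤ π i j) ∧ (∀ i, ∑ j, π i j = p i) ∧
      ∀ j, ∑ i, π i j = q j := by
  set a := fun i => p i - ∑ j, σ i j
  set b := fun j => q j - ∑ i, σ i j
  set m := ∑ i, a i
  have ha : ∀ i, 0 ≤ a i := fun i => sub_nonneg.2 (hσp i)
  have hb : ∀ j, 0 ≤ b j := fun j => sub_nonneg.2 (hσq j)
  have hbm : ∑ j, b j = m := by
    simp only [a, b, m, sum_sub_distrib, hpq, sum_comm (f := fun i j => σ i j)]
  have hm : 0 ≤ m := sum_nonneg fun i _ => ha i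
  have cancel : ∀ {c : ℝ}, 0 ≤ c → c ≤ m → c * m / m = c := fun hc hcm => by
    rcases hm.eq_or_lt with h | h
    · rw [← h] at hcm ⊢; simp [le_antisymm hcm hc]
    · field_simp
  refine ⟨fun i j => σ i j + a i * b j / m, fun i j => ?_, fun i => ?_, fun j => ?_⟩
  · have := ha i; have := hb j
    simp only [le_add_iff_nonneg_right]
    positivity
  · rw [sum_add_distrib, ← sum_div, ← mul_sum, hbm,
      cancel (ha i) (single_le_sum (fun i _ => ha i) (mem_univ i))]
    ring
  · rw [sum_add_distrib, ← sum_div, ← sum_mul, mul_comm,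
      cancel (hb j) (hbm ▸ single_le_sum (fun j _ => hb j) (mem_univ j))]
    ring

theorem exists_transport_cover (p : I → ℝ) (q : J → ℝ) (hp : ∀ i, 0 ≤ p i) (hq : ∀ j, 0 ≤ q j)
    (hpq : ∑ i, p i = ∑ j, q j) (T : Finset (I × J)) :
    ∃ π : I → J → ℝ, (∀ i j, 0 ≤ π i j) ∧ (∀ i, ∑ j, π i j = p i) ∧ (∀ j, ∑ i, π i j = q j) ∧
      ∃ (I' : Finset I) (J' : Finset J), (∀ x ∈ T, x.1 ∈ I' ∨ x.2 ∈ J') ∧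
        ∑ i ∈ I', p i + ∑ j ∈ J', q j ≤ ∑ x ∈ T, π x.1 x.2 := by
  obtain ⟨σ, hσ, hσq, I', J', hcover, hcut⟩ := exists_isRowFlow_cover p q hp hq T
  obtain ⟨π, hσπ, hπp, hπq⟩ := exists_transport_ge hσ.sum_le hσq hpq
  refine ⟨π, fun i j => (hσ.nonneg i j).trans (hσπ i j), hπp, hπq, I', J', hcover, ?_⟩
  calc ∑ i ∈ I', p i + ∑ j ∈ J', q j ≤ ∑ i, ∑ j, σ i j := hcut
    _ = ∑ x ∈ T, σ x.1 x.2 := by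
        rw [← Fintype.sum_prod_type', eq_comm]
        exact sum_subset (subset_univ T) fun x _ hx => hσ.eq_zero_of_notMem x.1 x.2 hx
    _ ≤ ∑ x ∈ T, π x.1 x.2 := sum_le_sum fun x _ => hσπ x.1 x.2

end Flow

lemma mul_cond_of_subset {Ω : Type*} [MeasurableSpace Ω] {μ : Measure Ω} [IsFiniteMeasure μ]
    {A E : Set Ω} (hA : MeasurableSet A) (hAE : A ⊆ E) {a : ℝ≥0∞} (ha : a ≤ μ A) :
    a * μ[E|A] = a := by
  rcases eq_or_ne (μ A) 0 with h | h
  · simp [le_zero_iff.1 (h ▸ ha)]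
  · rw [cond_apply hA, Set.inter_eq_left.2 hAE, ENNReal.inv_mul_cancel h (measure_ne_top _ _),
      mul_one]

lemma sum_measure_preimage_singleton_inter {Ω I : Type*} [MeasurableSpace Ω] [Fintype I]
    [MeasurableSpace I] [MeasurableSingletonClass I] (μ : Measure Ω) {φ : Ω → I}
    (hφ : Measurable φ) (E : Set Ω) : ∑ i, μ (φ ⁻¹' {i} ∩ E) = μ E := by
  simp_rw [← Measure.restrict_apply (hφ (measurableSet_singleton _))]
  rw [sum_measure_preimage_singleton _ fun i _ => hφ (measurableSet_singleton i)]
  simp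

section Lift

variable {I J : Type*} [Fintype I] [Fintype J] [MeasurableSpace I] [MeasurableSpace J]
  [MeasurableSingletonClass I] [MeasurableSingletonClass J]
  [MeasurableSpace X] [MeasurableSpace Y] {φ : X → I} {ψ : Y → J}

/-- A transport plan `π` between the laws of `φ` and `ψ` lifts to a coupling that, on each
block `φ⁻¹{i} × ψ⁻¹{j}`, is the product of the conditioned marginals with total mass `π i j`. -/
theorem exists_coupling_of_transport (μ : Measure X) (ν : Measure Y) [IsProbabilityMeasure μ]
    [IsProbabilityMeasure ν] (hφ : Measurable φ) (hψ : Measurable ψ) (π : I → J → ℝ≥0∞)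
    (hπμ : ∀ i, ∑ j, π i j = μ (φ ⁻¹' {i})) (hπν : ∀ j, ∑ i, π i j = ν (ψ ⁻¹' {j})) :
    ∃ P, IsCoupling μ ν P ∧ ∀ T : Finset (I × J), P (Prod.map φ ψ ⁻¹' T) = ∑ x ∈ T, π x.1 x.2 := by
  have hA i : MeasurableSet (φ ⁻¹' {i}) := hφ (measurableSet_singleton i)
  have hB j : MeasurableSet (ψ ⁻¹' {j}) := hψ (measurableSet_singleton j)
  have hπA i j : π i j ≤ μ (φ ⁻¹' {i}) := hπμ i ▸ single_le_sum (fun _ _ => zero_le) (mem_univ j)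
  have hπB i j : π i j ≤ ν (ψ ⁻¹' {j}) :=
    hπν j ▸ single_le_sum (f := (π · j)) (fun _ _ => zero_le) (mem_univ i)
  set P := ∑ i, ∑ j, π i j • (μ[|φ ⁻¹' {i}]).prod (ν[|ψ ⁻¹' {j}])
  have hP E F : P (E ×ˢ F) = ∑ i, ∑ j, π i j * (μ[E|φ ⁻¹' {i}] * ν[F|ψ ⁻¹' {j}]) := by
    simp [P, Measure.prod_prod]
  have hfst : P.map Prod.fst = μ := by
    ext E hE
    rw [Measure.map_apply measurable_fst hE, ← Set.prod_univ, hP,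
      ← sum_measure_preimage_singleton_inter μ hφ E]
    refine sum_congr rfl fun i _ => ?_
    calc ∑ j, π i j * (μ[E|φ ⁻¹' {i}] * ν[Set.univ|ψ ⁻¹' {j}])
        = ∑ j, π i j * μ[E|φ ⁻¹' {i}] := sum_congr rfl fun j _ => by
          rw [mul_comm (μ[E|_]), ← mul_assoc,
            mul_cond_of_subset (hB j) (Set.subset_univ _) (hπB i j)]
      _ = μ (φ ⁻¹' {i} ∩ E) := by rw [← sum_mul, hπμ, mul_comm, cond_mul_eq_inter (hA i)]
  have hsnd : P.map Prod.snd = ν := by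
    ext F hF
    rw [Measure.map_apply measurable_snd hF, ← Set.univ_prod, hP, sum_comm,
      ← sum_measure_preimage_singleton_inter ν hψ F]
    refine sum_congr rfl fun j _ => ?_
    calc ∑ i, π i j * (μ[Set.univ|φ ⁻¹' {i}] * ν[F|ψ ⁻¹' {j}])
        = ∑ i, π i j * ν[F|ψ ⁻¹' {j}] := sum_congr rfl fun i _ => by
          rw [← mul_assoc, mul_cond_of_subset (hA i) (Set.subset_univ _) (hπA i j)]
      _ = ν (ψ ⁻¹' {j} ∩ F) := by rw [← sum_mul, hπν, mul_comm, cond_mul_eq_inter (hB j)]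
  have hblock i j : P ((φ ⁻¹' {i}) ×ˢ (ψ ⁻¹' {j})) = π i j := by
    rw [hP, sum_eq_single i, sum_eq_single j]
    · rw [← mul_assoc, mul_cond_of_subset (hA i) subset_rfl (hπA i j),
        mul_cond_of_subset (hB j) subset_rfl (hπB i j)]
    · intro j' _ hj'
      simp [cond_apply (hB j'), ← Set.preimage_inter, hj']
    · simp
    · intro i' _ hi'
      simp [cond_apply (hA i'), ← Set.preimage_inter, hi']
    · simp
  have hprob : IsProbabilityMeasure P := ⟨by
    rw [← Set.preimage_univ (f := Prod.fst), ← Measure.map_apply measurable_fst .univ, hfst,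
      measure_univ]⟩
  refine ⟨P, ⟨hprob, hfst, hsnd⟩, fun T => ?_⟩
  rw [← sum_measure_preimage_singleton T fun x _ => hφ.prodMap hψ (measurableSet_singleton x)]
  refine sum_congr rfl fun x _ => ?_
  rw [← hblock]
  congr 1
  ext z
  simp [Prod.ext_iff]

theorem exists_coupling_cover (μ : Measure X) (ν : Measure Y) [IsProbabilityMeasure μ]
    [IsProbabilityMeasure ν] (hφ : Measurable φ) (hψ : Measurable ψ) (T : Finset (I × J)) :
    ∃ P, IsCoupling μ ν P ∧ ∃ (I' : Finset I) (J' : Finset J), (∀ x ∈ T, x.1 ∈ I' ∨ x.2 ∈ J') ∧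
      μ.real (φ ⁻¹' I') + ν.real (ψ ⁻¹' J') ≤ P.real (Prod.map φ ψ ⁻¹' T) := by
  have hA i (_ : i ∈ univ) : MeasurableSet (φ ⁻¹' {i}) := hφ (measurableSet_singleton i)
  have hB j (_ : j ∈ univ) : MeasurableSet (ψ ⁻¹' {j}) := hψ (measurableSet_singleton j)
  have hpq : ∑ i, μ.real (φ ⁻¹' {i}) = ∑ j, ν.real (ψ ⁻¹' {j}) := by
    rw [sum_measureReal_preimage_singleton _ hA, sum_measureReal_preimage_singleton _ hB]
    simp
  obtain ⟨π, hπ₀, hπμ, hπν, I', J', hcover, hcut⟩ := exists_transport_cover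
    (fun i => μ.real (φ ⁻¹' {i})) (fun j => ν.real (ψ ⁻¹' {j})) (fun _ => measureReal_nonneg)
    (fun _ => measureReal_nonneg) hpq T
  obtain ⟨P, hP, hPT⟩ := exists_coupling_of_transport μ ν hφ hψ (fun i j => .ofReal (π i j))
    (fun i => by rw [← ENNReal.ofReal_sum_of_nonneg fun j _ => hπ₀ i j, hπμ, ofReal_measureReal])
    (fun j => by rw [← ENNReal.ofReal_sum_of_nonneg fun i _ => hπ₀ i j, hπν, ofReal_measureReal])
  refine ⟨P, hP, I', J', hcover, ?_⟩
  rw [measureReal_def P, hPT, ENNReal.toReal_sum fun _ _ => ENNReal.ofReal_ne_top,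
    ← sum_measureReal_preimage_singleton _ fun i _ => hA i (mem_univ i),
    ← sum_measureReal_preimage_singleton _ fun j _ => hB j (mem_univ j)]
  simpa [ENNReal.toReal_ofReal (hπ₀ _ _)] using hcut

end Lift

section Duality

variable [MeasurableSpace X] [MeasurableSpace Y] {μ : Measure X} {ν : Measure Y}
  {c : X × Y → ℝ} {P : Measure (X × Y)} {f : X → ℝ} {g : Y → ℝ}

lemma IsCoupling.integrable_comp_fst (hP : IsCoupling μ ν P) (hf : Integrable f μ) :
    Integrable (fun z => f z.1) P := by
  rw [← hP.2.1] at hf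
  exact hf.comp_measurable measurable_fst

lemma IsCoupling.integrable_comp_snd (hP : IsCoupling μ ν P) (hg : Integrable g ν) :
    Integrable (fun z => g z.2) P := by
  rw [← hP.2.2] at hg
  exact hg.comp_measurable measurable_snd

lemma IsCoupling.integral_add (hP : IsCoupling μ ν P) (hf : Integrable f μ) (hg : Integrable g ν) :
    ∫ z, (f z.1 + g z.2) ∂P = ∫ x, f x ∂μ + ∫ y, g y ∂ν := by
  rw [MeasureTheory.integral_add (hP.integrable_comp_fst hf) (hP.integrable_comp_snd hg)]
  rw [← hP.2.1] at hf ⊢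
  rw [← hP.2.2] at hg ⊢
  rw [integral_map measurable_fst.aemeasurable hf.1, integral_map measurable_snd.aemeasurable hg.1]

lemma le_of_mem_dualLowerSet_of_mem_primalSet (hc : ∀ P, IsCoupling μ ν P → Integrable c P)
    {a b : ℝ} (ha : a ∈ dualLowerSet μ ν c) (hb : b ∈ primalSet μ ν c) : a ≤ b := by
  obtain ⟨f, g, hf, hg, hfg, rfl⟩ := ha
  obtain ⟨P, hP, rfl⟩ := hb
  rw [← hP.integral_add hf hg]
  exact integral_mono ((hP.integrable_comp_fst hf).add (hP.integrable_comp_snd hg)) (hc P hP)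
    fun z => hfg z.1 z.2

lemma le_of_mem_primalSet_of_mem_dualUpperSet (hc : ∀ P, IsCoupling μ ν P → Integrable c P)
    {a b : ℝ} (ha : a ∈ primalSet μ ν c) (hb : b ∈ dualUpperSet μ ν c) : a ≤ b := by
  obtain ⟨f, g, hf, hg, hfg, rfl⟩ := hb
  obtain ⟨P, hP, rfl⟩ := ha
  rw [← hP.integral_add hf hg]
  exact integral_mono (hc P hP) ((hP.integrable_comp_fst hf).add (hP.integrable_comp_snd hg))
    fun z => hfg z.1 z.2

lemma alphaInf_eq_betaSup_of_le (hc : ∀ P, IsCoupling μ ν P → Integrable c P) {a b : ℝ}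
    (ha : a ∈ primalSet μ ν c) (hb : b ∈ dualLowerSet μ ν c) (hab : a ≤ b) :
    alphaInf μ ν c = betaSup μ ν c := by
  have weak := fun {b a : ℝ} => le_of_mem_dualLowerSet_of_mem_primalSet (a := b) (b := a) hc
  refine le_antisymm ?_ (csSup_le ⟨b, hb⟩ fun b' hb' => le_csInf ⟨a, ha⟩ fun a' ha' => weak hb' ha')
  calc alphaInf μ ν c ≤ a := csInf_le ⟨b, fun a' ha' => weak hb ha'⟩ ha
    _ ≤ b := hab
    _ ≤ betaSup μ ν c := le_csSup ⟨a, fun b' hb' => weak hb' ha⟩ hb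

lemma alphaSup_eq_betaInf_of_le (hc : ∀ P, IsCoupling μ ν P → Integrable c P) {a b : ℝ}
    (ha : a ∈ primalSet μ ν c) (hb : b ∈ dualUpperSet μ ν c) (hba : b ≤ a) :
    alphaSup μ ν c = betaInf μ ν c := by
  have weak := fun {a b : ℝ} => le_of_mem_primalSet_of_mem_dualUpperSet (a := a) (b := b) hc
  refine le_antisymm (csSup_le ⟨a, ha⟩ fun a' ha' => le_csInf ⟨b, hb⟩ fun b' hb' => weak ha' hb') ?_
  calc betaInf μ ν c ≤ b := csInf_le ⟨a, fun b' hb' => weak ha hb'⟩ hb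
    _ ≤ a := hba
    _ ≤ alphaSup μ ν c := le_csSup ⟨b, fun a' ha' => weak ha' hb⟩ ha

end Duality

section Indicator

lemma indR_compl (R : Set (X × Y)) (z : X × Y) : indR Rᶜ z = 1 - indR R z := by
  by_cases hz : z ∈ R <;> simp [indR, hz]

lemma indR_le_indicator_add_indicator {R : Set (X × Y)} {U : Set X} {V : Set Y}
    (h : ∀ x y, (x, y) ∈ R → x ∈ U ∨ y ∈ V) (x : X) (y : Y) :
    indR R (x, y) ≤ U.indicator 1 x + V.indicator 1 y := by
  have hU : 0 ≤ U.indicator (1 : X → ℝ) x := Set.indicator_nonneg (fun _ _ => zero_le_one) x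
  have hV : 0 ≤ V.indicator (1 : Y → ℝ) y := Set.indicator_nonneg (fun _ _ => zero_le_one) y
  by_cases hxy : (x, y) ∈ R
  · rcases h x y hxy with hx | hy
    · simpa [indR, hxy, hx] using hV
    · simpa [indR, hxy, hy] using hU
  · simpa [indR, hxy] using add_nonneg hU hV

variable [MeasurableSpace X] [MeasurableSpace Y]

lemma IsCoupling.integrable_indR {μ : Measure X} {ν : Measure Y} {P : Measure (X × Y)}
    (hP : IsCoupling μ ν P) {R : Set (X × Y)} (hR : MeasurableSet R) : Integrable (indR R) P :=
  have := hP.1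
  (integrable_const 1).indicator hR

lemma integral_indR {R : Set (X × Y)} (hR : MeasurableSet R) (P : Measure (X × Y)) :
    ∫ z, indR R z ∂P = P.real R :=
  integral_indicator_one hR

variable {I J : Type*} [Fintype I] [Fintype J] [MeasurableSpace I] [MeasurableSpace J]
  [MeasurableSingletonClass I] [MeasurableSingletonClass J] {φ : X → I} {ψ : Y → J}
  (μ : Measure X) (ν : Measure Y) [IsProbabilityMeasure μ] [IsProbabilityMeasure ν]

theorem alphaSup_indR_preimage_eq_betaInf (hφ : Measurable φ) (hψ : Measurable ψ)
    (T : Finset (I × J)) :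
    alphaSup μ ν (indR (Prod.map φ ψ ⁻¹' T)) = betaInf μ ν (indR (Prod.map φ ψ ⁻¹' T)) := by
  have hR : MeasurableSet (Prod.map φ ψ ⁻¹' T) := hφ.prodMap hψ T.measurableSet
  obtain ⟨P, hP, I', J', hcover, hle⟩ := exists_coupling_cover μ ν hφ hψ T
  have hU : MeasurableSet (φ ⁻¹' I') := hφ I'.measurableSet
  have hV : MeasurableSet (ψ ⁻¹' J') := hψ J'.measurableSet
  refine alphaSup_eq_betaInf_of_le (fun _ hP => hP.integrable_indR hR) ⟨P, hP, rfl⟩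
    ⟨_, _, (integrable_const 1).indicator hU, (integrable_const 1).indicator hV,
      indR_le_indicator_add_indicator (U := φ ⁻¹' I') (V := ψ ⁻¹' J')
        fun x y hxy => hcover _ hxy, rfl⟩ ?_
  rwa [integral_indicator_one hU, integral_indicator_one hV, integral_indR hR]

theorem alphaInf_indR_preimage_eq_betaSup (hφ : Measurable φ) (hψ : Measurable ψ)
    (T : Finset (I × J)) :
    alphaInf μ ν (indR (Prod.map φ ψ ⁻¹' T)) = betaSup μ ν (indR (Prod.map φ ψ ⁻¹' T)) := by
  classical
  set R := Prod.map φ ψ ⁻¹' T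
  have hR : MeasurableSet R := hφ.prodMap hψ T.measurableSet
  obtain ⟨P, hP, I', J', hcover, hle⟩ := exists_coupling_cover μ ν hφ hψ Tᶜ
  have hU : MeasurableSet (φ ⁻¹' I') := hφ I'.measurableSet
  have hV : MeasurableSet (ψ ⁻¹' J') := hψ J'.measurableSet
  have hfg x y : 1 - (φ ⁻¹' I').indicator 1 x + -(ψ ⁻¹' J').indicator 1 y ≤ indR R (x, y) := by
    have := indR_le_indicator_add_indicator (R := Rᶜ) (U := φ ⁻¹' I') (V := ψ ⁻¹' J')
      (fun x y hxy => hcover (φ x, ψ y) (by simpa [R] using hxy)) x y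
    linarith [indR_compl R (x, y)]
  refine alphaInf_eq_betaSup_of_le (fun _ hP => hP.integrable_indR hR) ⟨P, hP, rfl⟩
    ⟨fun x => 1 - (φ ⁻¹' I').indicator 1 x, fun y => -(ψ ⁻¹' J').indicator 1 y,
      (integrable_const 1).sub ((integrable_const 1).indicator hU),
      ((integrable_const 1).indicator hV).neg, hfg, rfl⟩ ?_
  have : IsProbabilityMeasure P := hP.1
  rw [integral_sub (integrable_const 1) ((integrable_const 1).indicator hU), integral_neg,
    integral_indicator_one hU, integral_indicator_one hV, integral_indR hR]
  rw [coe_compl, Set.preimage_compl, probReal_compl_eq_one_sub hR] at hle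
  rw [integral_const, probReal_univ, smul_eq_mul, mul_one]
  linarith

end Indicator

lemma IsRectUnion.exists_eq_preimage [MeasurableSpace X] [MeasurableSpace Y] {R : Set (X × Y)}
    (hR : IsRectUnion R) :
    ∃ (n : ℕ) (φ : X → Fin n → Bool) (ψ : Y → Fin n → Bool), Measurable φ ∧ Measurable ψ ∧
      ∃ T : Finset ((Fin n → Bool) × (Fin n → Bool)), R = Prod.map φ ψ ⁻¹' T := by
  classical
  obtain ⟨n, A, B, hA, hB, rfl⟩ := hR
  refine ⟨n, fun x i => decide (x ∈ A i), fun y i => decide (y ∈ B i),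
    measurable_pi_lambda _ fun i => measurable_to_bool (by convert hA i; ext; simp),
    measurable_pi_lambda _ fun i => measurable_to_bool (by convert hB i; ext; simp),
    univ.filter fun st => ∃ i, st.1 i ∧ st.2 i, ?_⟩
  ext ⟨x, y⟩
  simp

theorem stmt5 [MeasurableSpace X] [MeasurableSpace Y]
    (μ : Measure X) (ν : Measure Y) [IsProbabilityMeasure μ] [IsProbabilityMeasure ν]
    (R : Set (X × Y)) (hR : IsRectUnion R) :
    alphaInf μ ν (indR R) = betaSup μ ν (indR R) ∧
      alphaSup μ ν (indR R) = betaInf μ ν (indR R) := by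
  obtain ⟨n, φ, ψ, hφ, hψ, T, rfl⟩ := hR.exists_eq_preimage
  exact ⟨alphaInf_indR_preimage_eq_betaSup μ ν hφ hψ T,
    alphaSup_indR_preimage_eq_betaInf μ ν hφ hψ T⟩
end
end

section
/- Let (X,F,μ) and (Y,G,ν) be probability spaces and H a countable union of measurable rectangles. If P(H) = 0 for every probability measure P on F⊗G with marginals μ and ν, then there exist A∈F and B∈G with μ(A) = ν(B) = 0 and H ⊆ (A×Y) ∪ (X×B). -/
open MeasureTheory Filter Topology

noncomputable section

variable {X Y : Type*}

/-! Only the product coupling is needed: `μ ⊗ ν` kills a countable union of rectangles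
exactly when each rectangle has a null side, and such rectangles fit into one null strip
`A' × Y` or `X × B'` according to which side is null. -/

theorem isCoupling_prod [MeasurableSpace X] [MeasurableSpace Y]
    (μ : Measure X) (ν : Measure Y) [IsProbabilityMeasure μ] [IsProbabilityMeasure ν] :
    IsCoupling μ ν (μ.prod ν) :=
  ⟨inferInstance, by simp [Measure.map_fst_prod], by simp [Measure.map_snd_prod]⟩

theorem measure_eq_zero_or_of_prod_prod_eq_zero [MeasurableSpace X] [MeasurableSpace Y]
    {μ : Measure X} {ν : Measure Y} [SFinite ν] {s : Set X} {t : Set Y}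
    (h : μ.prod ν (s ×ˢ t) = 0) : μ s = 0 ∨ ν t = 0 := by
  rwa [Measure.prod_prod, mul_eq_zero] at h

theorem exists_null_strips_of_forall_null_side [MeasurableSpace X] [MeasurableSpace Y]
    {ι : Type*} [Countable ι] (μ : Measure X) (ν : Measure Y) {A : ι → Set X} {B : ι → Set Y}
    (hnull : ∀ i, μ (A i) = 0 ∨ ν (B i) = 0) :
    ∃ (A' : Set X) (B' : Set Y), MeasurableSet A' ∧ MeasurableSet B' ∧
      μ A' = 0 ∧ ν B' = 0 ∧
        ⋃ i, A i ×ˢ B i ⊆ (A' ×ˢ (Set.univ : Set Y)) ∪ ((Set.univ : Set X) ×ˢ B') := by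
  let S : Set ι := {i | μ (A i) = 0}
  refine ⟨toMeasurable μ (⋃ i ∈ S, A i), toMeasurable ν (⋃ i ∈ Sᶜ, B i),
    measurableSet_toMeasurable _ _, measurableSet_toMeasurable _ _, ?_, ?_, ?_⟩
  · rw [measure_toMeasurable, measure_biUnion_null_iff S.to_countable]
    exact fun i hi => hi
  · rw [measure_toMeasurable, measure_biUnion_null_iff Sᶜ.to_countable]
    exact fun i hi => (hnull i).resolve_left hi
  · rintro ⟨x, y⟩ hxy
    obtain ⟨i, hx, hy⟩ : ∃ i, x ∈ A i ∧ y ∈ B i := by simpa using hxy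
    by_cases hi : i ∈ S
    · exact Or.inl ⟨subset_toMeasurable _ _ (Set.mem_biUnion hi hx), trivial⟩
    · exact Or.inr ⟨trivial, subset_toMeasurable _ _ (Set.mem_biUnion hi hy)⟩

theorem stmt9_general [MeasurableSpace X] [MeasurableSpace Y]
    (μ : Measure X) (ν : Measure Y) [IsProbabilityMeasure μ] [IsProbabilityMeasure ν]
    (A : ℕ → Set X) (B : ℕ → Set Y)
    (H : Set (X × Y)) (hH : H = ⋃ n, A n ×ˢ B n)
    (hnull : ∀ P : Measure (X × Y), IsCoupling μ ν P → P H = 0) :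
    ∃ (A' : Set X) (B' : Set Y), MeasurableSet A' ∧ MeasurableSet B' ∧
      μ A' = 0 ∧ ν B' = 0 ∧ H ⊆ (A' ×ˢ (Set.univ : Set Y)) ∪ ((Set.univ : Set X) ×ˢ B') := by
  have hprod : μ.prod ν H = 0 := hnull _ (isCoupling_prod μ ν)
  subst hH
  exact exists_null_strips_of_forall_null_side μ ν fun n =>
    measure_eq_zero_or_of_prod_prod_eq_zero
      (measure_mono_null (Set.subset_iUnion (fun n => A n ×ˢ B n) n) hprod)

theorem stmt9 [MeasurableSpace X] [MeasurableSpace Y]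
    (μ : Measure X) (ν : Measure Y) [IsProbabilityMeasure μ] [IsProbabilityMeasure ν]
    (A : ℕ → Set X) (B : ℕ → Set Y)
    (hA : ∀ n, MeasurableSet (A n)) (hB : ∀ n, MeasurableSet (B n))
    (H : Set (X × Y)) (hH : H = ⋃ n, A n ×ˢ B n)
    (hnull : ∀ P : Measure (X × Y), IsCoupling μ ν P → P H = 0) :
    ∃ (A' : Set X) (B' : Set Y), MeasurableSet A' ∧ MeasurableSet B' ∧
      μ A' = 0 ∧ ν B' = 0 ∧ H ⊆ (A' ×ˢ (Set.univ : Set Y)) ∪ ((Set.univ : Set X) ×ˢ B') :=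
  stmt9_general μ ν A B H hH hnull
end
end

section
/- Let X be a separable metric space with Borel σ-field F, μ a Borel probability on X vanishing on singletons, H = ∪ₙ(Aₙ×Bₙ) a countable union of measurable rectangles in X×X, and Δ the diagonal. Then α*(1_{H∩Δ}) = β*(1_{H∩Δ}) = μ(∪ₙ(Aₙ∩Bₙ)), with both marginals equal to μ. -/
open MeasureTheory Filter Topology

noncomputable section

variable {X Y : Type*}

theorem stmt12 [MetricSpace X] [TopologicalSpace.SeparableSpace X]
    [MeasurableSpace X] [BorelSpace X]
    (μ : Measure X) [IsProbabilityMeasure μ] (hatom : ∀ x : X, μ {x} = 0)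
    (A B : ℕ → Set X) (hA : ∀ n, MeasurableSet (A n)) (hB : ∀ n, MeasurableSet (B n))
    (H : Set (X × X)) (hH : H = ⋃ n, A n ×ˢ B n) :
    alphaSup μ μ (indR (H ∩ {p : X × X | p.1 = p.2})) = (μ (⋃ n, A n ∩ B n)).toReal ∧
      betaInf μ μ (indR (H ∩ {p : X × X | p.1 = p.2})) = (μ (⋃ n, A n ∩ B n)).toReal := by

  haveI : SecondCountableTopology X := UniformSpace.secondCountable_of_separable X
  set S : Set X := ⋃ n, A n ∩ B n with hSdef
  have hS : MeasurableSet S := MeasurableSet.iUnion fun n => (hA n).inter (hB n)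
  set K : Set (X × X) := H ∩ {p : X × X | p.1 = p.2} with hKdef
  have hHm : MeasurableSet H := by
    rw [hH]; exact MeasurableSet.iUnion fun n => (hA n).prod (hB n)
  have hDiag : MeasurableSet {p : X × X | p.1 = p.2} :=
    (isClosed_diagonal (X := X)).measurableSet
  have hK : MeasurableSet K := hHm.inter hDiag
  have hmemK : ∀ x : X, (x, x) ∈ K ↔ x ∈ S := by
    intro x
    simp only [hKdef, hH, Set.mem_inter_iff, Set.mem_iUnion, Set.mem_prod,
      Set.mem_setOf_eq, hSdef]
    tauto
  have hKsub : K ⊆ S ×ˢ (Set.univ : Set X) := by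
    rintro ⟨x, y⟩ ⟨hxy, (heq : x = y)⟩
    subst heq
    exact ⟨(hmemK x).1 ⟨hxy, rfl⟩, trivial⟩
  -- integral of indicator against any measure
  have hint : ∀ Q : Measure (X × X), ∫ z, indR K z ∂Q = (Q K).toReal := by
    intro Q
    simp only [indR]
    exact integral_indicator_one hK
  -- diagonal coupling
  have hdiag_meas : Measurable (fun x : X => (x, x)) := measurable_id.prodMk measurable_id
  set P : Measure (X × X) := μ.map (fun x => (x, x)) with hP
  have hPprob : IsProbabilityMeasure P := Measure.isProbabilityMeasure_map hdiag_meas.aemeasurable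
  have hPfst : P.map Prod.fst = μ := by
    rw [hP, Measure.map_map measurable_fst hdiag_meas]
    simp [Function.comp_def]
  have hPsnd : P.map Prod.snd = μ := by
    rw [hP, Measure.map_map measurable_snd hdiag_meas]
    simp [Function.comp_def]
  have hPK : P K = μ S := by
    rw [hP, Measure.map_apply hdiag_meas hK]
    congr 1
    ext x
    simpa using hmemK x
  have hPcoupling : IsCoupling μ μ P := ⟨hPprob, hPfst, hPsnd⟩
  have hmmem : (μ S).toReal ∈ primalSet μ μ (indR K) :=
    ⟨P, hPcoupling, by rw [hint P, hPK]⟩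
  -- upper bound for all couplings
  have hub : ∀ r ∈ primalSet μ μ (indR K), r ≤ (μ S).toReal := by
    rintro r ⟨Q, ⟨hQprob, hQfst, hQsnd⟩, rfl⟩
    rw [hint Q]
    have h1 : Q K ≤ μ S := by
      calc Q K ≤ Q (S ×ˢ (Set.univ : Set X)) := measure_mono hKsub
        _ = Q (Prod.fst ⁻¹' S) := by rw [Set.prod_univ]
        _ = (Q.map Prod.fst) S := (Measure.map_apply measurable_fst hS).symm
        _ = μ S := by rw [hQfst]
    exact ENNReal.toReal_mono (measure_ne_top μ S) h1
  have halpha : alphaSup μ μ (indR K) = (μ S).toReal := by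
    refine le_antisymm (csSup_le ⟨_, hmmem⟩ hub) (le_csSup ⟨_, hub⟩ hmmem)
  -- beta part
  have hfint : Integrable (S.indicator fun _ => (1 : ℝ)) μ :=
    (integrable_const (1 : ℝ)).indicator hS
  have hfval : ∫ x, S.indicator (fun _ => (1 : ℝ)) x ∂μ = (μ S).toReal :=
    integral_indicator_one hS
  have hkey : ∀ x : X, S.indicator (fun _ => (1 : ℝ)) x = indR K (x, x) := by
    intro x
    by_cases hx : x ∈ S
    · rw [Set.indicator_of_mem hx]
      rw [indR, Set.indicator_of_mem ((hmemK x).2 hx)]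
    · rw [Set.indicator_of_notMem hx]
      rw [indR, Set.indicator_of_notMem (fun h => hx ((hmemK x).1 h))]
  have hmmem2 : (μ S).toReal ∈ dualUpperSet μ μ (indR K) := by
    refine ⟨S.indicator fun _ => (1 : ℝ), fun _ => (0 : ℝ), hfint, integrable_const 0,
      ?_, by simp [hfval]⟩
    intro x y
    by_cases hxy : (x, y) ∈ K
    · have hx : x ∈ S := by
        obtain ⟨hH', (heq : x = y)⟩ := hxy
        exact (hmemK x).1 ⟨by rwa [← heq] at hH'; , rfl⟩
      rw [indR, Set.indicator_of_mem hxy, Set.indicator_of_mem hx]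
      norm_num
    · rw [indR, Set.indicator_of_notMem hxy]
      by_cases hx : x ∈ S
      · rw [Set.indicator_of_mem hx]; norm_num
      · rw [Set.indicator_of_notMem hx]; norm_num
  have hlb : ∀ r ∈ dualUpperSet μ μ (indR K), (μ S).toReal ≤ r := by
    rintro r ⟨f, g, hf, hg, hfg, rfl⟩
    have hpt : ∀ x : X, S.indicator (fun _ => (1 : ℝ)) x ≤ f x + g x := by
      intro x
      rw [hkey x]
      exact hfg x x
    calc (μ S).toReal = ∫ x, S.indicator (fun _ => (1 : ℝ)) x ∂μ := hfval.symm
      _ ≤ ∫ x, (f x + g x) ∂μ := integral_mono hfint (hf.add hg) hpt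
      _ = ∫ x, f x ∂μ + ∫ y, g y ∂μ := integral_add hf hg
  have hbeta : betaInf μ μ (indR K) = (μ S).toReal :=
    le_antisymm (csInf_le ⟨_, hlb⟩ hmmem2) (le_csInf ⟨_, hmmem2⟩ hlb)
  exact ⟨halpha, hbeta⟩
end
end
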